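/- arXiv:1212.5738 — 2 statements merged into one kernel-verified Lean document; each statement's English description precedes it below -/
import Mathlib

section
/- Let p be a prime, n ≥ 1, let A ⊆ (ZMod p)^n, and let v ∈ (ZMod p)^n be nonzero. Then |C_v(A) + C_v(A)| ≤ |A + A|. -/
open Pointwise

/-- `u ≺ v` in the lexicographic order: `u i < v i` (as values in `{0,…,p-1}`)
at the largest coordinate `i` where `u` and `v` differ. -/
def lexLt {n p : ℕ} (u v : Fin n → ZMod p) : Prop :=
  ∃ i : Fin n, (u i).val < (v i).val ∧ ∀ j : Fin n, i < j → u j = v j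

/-- The `v`-line through `u`: `L_v^u = {u + k•v : k ∈ ZMod p}`. -/
def line {n p : ℕ} (v u : Fin n → ZMod p) : Set (Fin n → ZMod p) :=
  {x | ∃ k : ZMod p, x = u + k • v}

/-- `IS k L`: the set of the `k` lexicographically smallest elements of `L`. -/
def IS {n p : ℕ} (k : ℕ) (L : Set (Fin n → ZMod p)) : Set (Fin n → ZMod p) :=
  {x | x ∈ L ∧ ({y | y ∈ L ∧ lexLt y x}).ncard < k}

/-- The `v`-compression of `A`: on each `v`-line `L`, replace `A ∩ L` by the
initial segment of `L` of the same cardinality. -/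
def comp {n p : ℕ} (v : Fin n → ZMod p) (A : Set (Fin n → ZMod p)) :
    Set (Fin n → ZMod p) :=
  ⋃ u : Fin n → ZMod p, IS (A ∩ line v u).ncard (line v u)

/-- `E = {0, e₁, …, e_n}`: zero together with the standard basis. -/
def stdE (n p : ℕ) : Set (Fin n → ZMod p) :=
  {0} ∪ Set.range (fun i : Fin n => Pi.single i (1 : ZMod p))

/-- `A` is `𝓔`-compressed: `E ⊆ A` and `A` is `v`-compressed for every nonzero `v`
whose compression keeps `E` inside the set. -/
def ECompressed {n p : ℕ} (A : Set (Fin n → ZMod p)) : Prop :=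
  stdE n p ⊆ A ∧
    ∀ v : Fin n → ZMod p, v ≠ 0 → stdE n p ⊆ comp v A → comp v A = A

/-! Let `i` be the last coordinate at which `v` is nonzero. On every `v`-line `x ↦ x i` is a
bijection onto `ZMod p` under which the lexicographic order becomes the order of `(x i).val`, so
`C_v(A)` consists of the `x` with `(x i).val < |A ∩ L_v^x|`. For `a, b ∈ C_v(A)`, Cauchy–Davenport
applied to the `i`-th coordinates of `A ∩ L_v^a` and `A ∩ L_v^b` gives
`((a + b) i).val < |(A + A) ∩ L_v^(a+b)|`. Hence every `v`-line meets `C_v(A) + C_v(A)` in at most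
as many points as it meets `A + A`, and the lines partition the space. -/

lemma exists_ne_zero_forall_gt_eq_zero {ι M : Type*} [LinearOrder ι] [Finite ι] [Zero M]
    {v : ι → M} (hv : v ≠ 0) : ∃ i, v i ≠ 0 ∧ ∀ j, i < j → v j = 0 := by
  obtain ⟨i, hi⟩ := (Set.toFinite {j | v j ≠ 0}).exists_maximal (Function.ne_iff.1 hv)
  refine ⟨i, hi.prop, fun j hij => ?_⟩
  by_contra hj
  exact hij.not_ge (hi.le_of_ge hj hij.le)

lemma Set.ncard_le_ncard_of_forall_fiber {α β : Type*} [Finite α] (f : α → β) {s t : Set α}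
    (h : ∀ a, (s ∩ f ⁻¹' {f a}).ncard ≤ (t ∩ f ⁻¹' {f a}).ncard) : s.ncard ≤ t.ncard := by
  classical
  have := Fintype.ofFinite α
  have hfib : ∀ (u : Set α) a,
      (u.toFinset.filter (f · = f a)).card = (u ∩ f ⁻¹' {f a}).ncard := by
    intro u a
    rw [Set.ncard_eq_toFinset_card']
    congr 1
    ext x
    simp
  rw [Set.ncard_eq_toFinset_card', Set.ncard_eq_toFinset_card',
    Finset.card_eq_sum_card_fiberwise (fun a _ => Finset.mem_image_of_mem f (Finset.mem_univ a)),
    Finset.card_eq_sum_card_fiberwise (fun a _ => Finset.mem_image_of_mem f (Finset.mem_univ a))]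
  refine Finset.sum_le_sum fun b hb => ?_
  obtain ⟨a, -, rfl⟩ := Finset.mem_image.1 hb
  rw [hfib, hfib]
  exact h a

lemma ZMod.ncard_setOf_val_lt {p : ℕ} [NeZero p] (s : ℕ) :
    {t : ZMod p | t.val < s}.ncard = min s p := by
  have himg : ZMod.val '' {t : ZMod p | t.val < s} = Set.Iio (min s p) := by
    ext j
    simp only [Set.mem_image, Set.mem_ofPred_eq, Set.mem_Iio, lt_min_iff]
    constructor
    · rintro ⟨t, ht, rfl⟩
      exact ⟨ht, ZMod.val_lt t⟩
    · rintro ⟨hjs, hjp⟩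
      exact ⟨j, by rwa [ZMod.val_cast_of_lt hjp], ZMod.val_cast_of_lt hjp⟩
  rw [← Set.ncard_image_of_injective _ (ZMod.val_injective p), himg, ← Finset.coe_range,
    Set.ncard_coe_finset, Finset.card_range]

lemma ZMod.min_le_ncard_add {p : ℕ} [Fact p.Prime] {s t : Set (ZMod p)} (hs : s.Nonempty)
    (ht : t.Nonempty) : min p (s.ncard + t.ncard - 1) ≤ (s + t).ncard := by
  obtain ⟨s, rfl⟩ := (Set.toFinite s).exists_finset_coe
  obtain ⟨t, rfl⟩ := (Set.toFinite t).exists_finset_coe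
  classical
  rw [← Finset.coe_add, Set.ncard_coe_finset, Set.ncard_coe_finset, Set.ncard_coe_finset]
  exact ZMod.cauchy_davenport Fact.out (Finset.coe_nonempty.1 hs) (Finset.coe_nonempty.1 ht)

section Line

variable {n p : ℕ} {v : Fin n → ZMod p}

lemma mem_line_self (v u : Fin n → ZMod p) : u ∈ line v u := ⟨0, by simp⟩

lemma line_eq_of_mem {u x : Fin n → ZMod p} (h : x ∈ line v u) : line v x = line v u := by
  obtain ⟨k, rfl⟩ := h
  ext y
  constructor
  · rintro ⟨k', rfl⟩
    exact ⟨k + k', by rw [add_smul]; abel⟩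
  · rintro ⟨k', rfl⟩
    exact ⟨k' - k, by rw [sub_smul]; abel⟩

lemma line_eq_line_iff {u x : Fin n → ZMod p} : line v x = line v u ↔ x ∈ line v u :=
  ⟨fun h => h ▸ mem_line_self v x, line_eq_of_mem⟩

lemma add_mem_line {u₁ u₂ x y : Fin n → ZMod p} (hx : x ∈ line v u₁) (hy : y ∈ line v u₂) :
    x + y ∈ line v (u₁ + u₂) := by
  obtain ⟨k, rfl⟩ := hx
  obtain ⟨k', rfl⟩ := hy
  exact ⟨k + k', by rw [add_smul]; abel⟩

lemma apply_eq_of_mem_line {u x y : Fin n → ZMod p} {j : Fin n} (hvj : v j = 0)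
    (hx : x ∈ line v u) (hy : y ∈ line v u) : x j = y j := by
  obtain ⟨k, rfl⟩ := hx
  obtain ⟨k', rfl⟩ := hy
  simp [hvj]

variable [Fact p.Prime] {i : Fin n}

lemma injOn_apply_line (hvi : v i ≠ 0) (u : Fin n → ZMod p) :
    Set.InjOn (fun x => x i) (line v u) := by
  rintro x ⟨k, rfl⟩ y ⟨k', rfl⟩ h
  simp only [Pi.add_apply, Pi.smul_apply, smul_eq_mul, add_right_inj] at h
  rw [mul_right_cancel₀ hvi h]

lemma image_apply_line (hvi : v i ≠ 0) (u : Fin n → ZMod p) :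
    (fun x => x i) '' line v u = Set.univ := by
  refine Set.eq_univ_of_forall fun t => ⟨u + ((t - u i) * (v i)⁻¹) • v, ⟨_, rfl⟩, ?_⟩
  simp only [Pi.add_apply, Pi.smul_apply, smul_eq_mul]
  field_simp
  ring

lemma ncard_sep_line_apply (hvi : v i ≠ 0) (u : Fin n → ZMod p) (P : ZMod p → Prop) :
    {x ∈ line v u | P (x i)}.ncard = {t | P t}.ncard := by
  have hsep : {x ∈ line v u | P (x i)} = line v u ∩ (fun x => x i) ⁻¹' {t | P t} := rfl
  rw [← ((injOn_apply_line hvi u).mono (Set.sep_subset _ _)).ncard_image, hsep,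
    Set.image_inter_preimage, image_apply_line hvi, Set.univ_inter]

lemma lexLt_iff_of_mem_line (hvi : v i ≠ 0) (hmax : ∀ j, i < j → v j = 0)
    {u x y : Fin n → ZMod p} (hx : x ∈ line v u) (hy : y ∈ line v u) :
    lexLt y x ↔ (y i).val < (x i).val := by
  refine ⟨fun ⟨j, hlt, hagree⟩ => ?_, fun h => ⟨i, h, fun j hj => ?_⟩⟩
  · rcases lt_trichotomy j i with hji | rfl | hij
    · rw [injOn_apply_line hvi u hy hx (hagree i hji)] at hlt
      exact (lt_irrefl _ hlt).elim
    · exact hlt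
    · rw [apply_eq_of_mem_line (hmax j hij) hy hx] at hlt
      exact (lt_irrefl _ hlt).elim
  · exact apply_eq_of_mem_line (hmax j hj) hy hx

lemma ncard_lexLt_line (hvi : v i ≠ 0) (hmax : ∀ j, i < j → v j = 0)
    {u x : Fin n → ZMod p} (hx : x ∈ line v u) :
    {y | y ∈ line v u ∧ lexLt y x}.ncard = (x i).val := by
  have hset : {y | y ∈ line v u ∧ lexLt y x} = {y ∈ line v u | (y i).val < (x i).val} :=
    Set.ext fun y => and_congr_right fun hy => lexLt_iff_of_mem_line hvi hmax hx hy
  rw [hset, ncard_sep_line_apply hvi u (·.val < (x i).val), ZMod.ncard_setOf_val_lt,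
    min_eq_left (ZMod.val_lt _).le]

lemma comp_eq_setOf (hvi : v i ≠ 0) (hmax : ∀ j, i < j → v j = 0) (A : Set (Fin n → ZMod p)) :
    comp v A = {x | (x i).val < (A ∩ line v x).ncard} := by
  ext x
  simp only [comp, Set.mem_iUnion, IS, Set.mem_ofPred_eq]
  constructor
  · rintro ⟨u, hxL, hcard⟩
    rwa [ncard_lexLt_line hvi hmax hxL, ← line_eq_of_mem hxL] at hcard
  · intro h
    exact ⟨x, mem_line_self v x, by rwa [ncard_lexLt_line hvi hmax (mem_line_self v x)]⟩

lemma min_le_ncard_add_inter_line (hvi : v i ≠ 0) {A : Set (Fin n → ZMod p)}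
    {a b : Fin n → ZMod p} (ha : (A ∩ line v a).Nonempty) (hb : (A ∩ line v b).Nonempty) :
    min p ((A ∩ line v a).ncard + (A ∩ line v b).ncard - 1)
      ≤ ((A + A) ∩ line v (a + b)).ncard := by
  let e : (Fin n → ZMod p) →+ ZMod p := Pi.evalAddMonoidHom (fun _ => ZMod p) i
  have hcard : ∀ u, (e '' (A ∩ line v u)).ncard = (A ∩ line v u).ncard := fun u =>
    ((injOn_apply_line hvi u).mono Set.inter_subset_right).ncard_image
  calc min p ((A ∩ line v a).ncard + (A ∩ line v b).ncard - 1)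
      ≤ (e '' (A ∩ line v a) + e '' (A ∩ line v b)).ncard := by
        rw [← hcard a, ← hcard b]
        exact ZMod.min_le_ncard_add (ha.image e) (hb.image e)
    _ = (e '' ((A ∩ line v a) + (A ∩ line v b))).ncard := by rw [Set.image_add]
    _ ≤ ((A ∩ line v a) + (A ∩ line v b)).ncard := Set.ncard_image_le (Set.toFinite _)
    _ ≤ ((A + A) ∩ line v (a + b)).ncard := by
        refine Set.ncard_le_ncard ?_ (Set.toFinite _)
        rintro _ ⟨x, hx, y, hy, rfl⟩
        exact ⟨Set.add_mem_add hx.1 hy.1, add_mem_line hx.2 hy.2⟩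

lemma apply_val_lt_of_mem_comp_add (hvi : v i ≠ 0) (hmax : ∀ j, i < j → v j = 0)
    {A : Set (Fin n → ZMod p)} {a b : Fin n → ZMod p} (ha : a ∈ comp v A) (hb : b ∈ comp v A) :
    ((a + b) i).val < ((A + A) ∩ line v (a + b)).ncard := by
  rw [comp_eq_setOf hvi hmax, Set.mem_ofPred_eq] at ha hb
  have hCD := min_le_ncard_add_inter_line hvi
    (Set.nonempty_of_ncard_ne_zero (by omega : (A ∩ line v a).ncard ≠ 0))
    (Set.nonempty_of_ncard_ne_zero (by omega : (A ∩ line v b).ncard ≠ 0))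
  have hle : ((a + b) i).val ≤ (a i).val + (b i).val := ZMod.val_add_le _ _
  have hlt : ((a + b) i).val < p := ZMod.val_lt _
  omega

lemma ncard_comp_add_inter_line_le (hvi : v i ≠ 0) (hmax : ∀ j, i < j → v j = 0)
    (A : Set (Fin n → ZMod p)) (w : Fin n → ZMod p) :
    ((comp v A + comp v A) ∩ line v w).ncard ≤ ((A + A) ∩ line v w).ncard := by
  set N := ((A + A) ∩ line v w).ncard
  calc ((comp v A + comp v A) ∩ line v w).ncard
      ≤ {x ∈ line v w | (x i).val < N}.ncard := by
        refine Set.ncard_le_ncard ?_ (Set.toFinite _)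
        rintro _ ⟨⟨a, ha, b, hb, rfl⟩, hab⟩
        have := apply_val_lt_of_mem_comp_add hvi hmax ha hb
        rw [line_eq_of_mem hab] at this
        exact ⟨hab, this⟩
    _ = min N p := by rw [ncard_sep_line_apply hvi w (·.val < N), ZMod.ncard_setOf_val_lt]
    _ ≤ N := min_le_left _ _

end Line

theorem statement5_general (p n : ℕ) (hp : p.Prime)
    (A : Set (Fin n → ZMod p)) (v : Fin n → ZMod p) (hv : v ≠ 0) :
    (comp v A + comp v A).ncard ≤ (A + A).ncard := by
  have := Fact.mk hp
  obtain ⟨i, hvi, hmax⟩ := exists_ne_zero_forall_gt_eq_zero hv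
  refine Set.ncard_le_ncard_of_forall_fiber (line v) fun u => ?_
  have hfiber : line v ⁻¹' {line v u} = line v u := Set.ext fun _ => line_eq_line_iff
  rw [hfiber]
  exact ncard_comp_add_inter_line_le hvi hmax A u

theorem statement5 (p n : ℕ) (hp : p.Prime) (hn : 1 ≤ n)
    (A : Set (Fin n → ZMod p)) (v : Fin n → ZMod p) (hv : v ≠ 0) :
    (comp v A + comp v A).ncard ≤ (A + A).ncard :=
  statement5_general p n hp A v hv
end

section
/- Let p ≥ 3 be a prime, and let m ≥ 2 and q with 1 ≤ q ≤ p−1 be integers. Let A = {k·e₁ : 0 ≤ k ≤ q} ∪ {e₂, …, e_m} ⊆ (ZMod p)^m, where e₁, …, e_m is the standard basis. Then |A| = m + q, |A + A| = m(m+1)/2 + q(m−1) + min(2q, p−1), and the affine span of A is all of (ZMod p)^m, of size p^m. -/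
/-!
`A + A` is the union of `{k e₁ : k ≤ 2q}`, `{k e₁ : k ≤ q} + E` and `E + E`, where
`E = {e₂, …, eₘ}`. The sum of the coordinates other than the first is `0`, `1`, `2` on these
three pieces, and these values are distinct in `ZMod p` because `p ≥ 3`, so the union is disjoint.
The pieces have `min (2q) (p - 1) + 1`, `(q + 1)(m - 1)` and `m(m - 1)/2` elements: `k e₁` only
depends on `k mod p`, sums `x + y` with `x` on the first axis and `y` off it determine `x` and `y`,
and `eᵢ + eⱼ` determines `{i, j}` since `2 ≠ 0`. The affine span is everything because `A`
contains `0` and every `eᵢ`.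
-/

open Pointwise

/-- The affine span of `A`: the smallest coset of a subgroup containing `A`,
realized as the intersection of all such cosets. -/
def affSpan {G : Type*} [AddCommGroup G] (A : Set G) : Set G :=
  ⋂₀ {C : Set G | A ⊆ C ∧ ∃ (H : AddSubgroup G) (g : G), C = g +ᵥ (H : Set G)}

theorem affSpan_eq_univ_of_zero_mem {G : Type*} [AddCommGroup G] {A : Set G} (h0 : 0 ∈ A)
    (hA : AddSubgroup.closure A = ⊤) : affSpan A = Set.univ := by
  refine Set.eq_univ_of_forall fun x C ⟨hAC, H, g, hC⟩ => ?_
  subst hC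
  have hA_sub : A ⊆ H := by
    obtain ⟨h₀, hh₀, hg₀⟩ := Set.mem_vadd_set.1 (hAC h0)
    have hg : g ∈ H := eq_neg_of_add_eq_zero_left hg₀ ▸ H.neg_mem hh₀
    intro a ha
    obtain ⟨h, hh, rfl⟩ := Set.mem_vadd_set.1 (hAC ha)
    exact H.add_mem hg hh
  have hH : H = ⊤ := top_le_iff.1 (hA ▸ (AddSubgroup.closure_le H).2 hA_sub)
  simp [hH]

theorem ZMod.addSubgroupClosure_range_single_one (n : ℕ) (ι : Type*) [DecidableEq ι]
    [Fintype ι] :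
    AddSubgroup.closure (Set.range fun i : ι => Pi.single i (1 : ZMod n)) = ⊤ := by
  refine eq_top_iff.2 fun x _ => ?_
  rw [← Finset.univ_sum_single x]
  refine AddSubgroup.sum_mem _ fun i _ => ?_
  have : Pi.single i (x i) = ((x i).cast : ℤ) • (Pi.single i 1 : ι → ZMod n) := by
    rw [← Pi.single_smul' i ((x i).cast : ℤ) (1 : ZMod n), zsmul_one, ZMod.intCast_zmod_cast]
  rw [this]
  exact AddSubgroup.zsmul_mem _ (AddSubgroup.subset_closure (Set.mem_range_self i)) _

theorem ZMod.ncard_natCast_image_Iic (n k : ℕ) [NeZero n] :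
    ((Nat.cast : ℕ → ZMod n) '' Set.Iic k).ncard = min k (n - 1) + 1 := by
  have hn := NeZero.pos n
  have hred : (Nat.cast : ℕ → ZMod n) '' Set.Iic k = Nat.cast '' Set.Iic (min k (n - 1)) := by
    refine subset_antisymm ?_ (Set.image_mono (Set.Iic_subset_Iic.2 (min_le_left _ _)))
    rintro _ ⟨j, hj, rfl⟩
    refine ⟨j % n, le_min ((Nat.mod_le j n).trans hj) ?_, ZMod.natCast_mod j n⟩
    have := Nat.mod_lt j hn
    omega
  have hinj : Set.InjOn (Nat.cast : ℕ → ZMod n) (Set.Iic (min k (n - 1))) := by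
    intro a ha b hb hab
    have ha : a < n := by simp only [Set.mem_Iic] at ha; omega
    have hb : b < n := by simp only [Set.mem_Iic] at hb; omega
    rwa [ZMod.natCast_eq_natCast_iff', Nat.mod_eq_of_lt ha, Nat.mod_eq_of_lt hb] at hab
  rw [hred, hinj.ncard_image, Set.ncard_Iic_nat]

theorem Nat.Iic_add_Iic (a b : ℕ) : Set.Iic a + Set.Iic b = Set.Iic (a + b) := by
  refine subset_antisymm (Set.Iic_add_Iic_subset a b) fun k (hk : k ≤ a + b) => ?_
  exact ⟨min k a, min_le_right k a, k - min k a, by simp only [Set.mem_Iic]; omega,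
    Nat.add_sub_cancel' (min_le_left k a)⟩

theorem Set.disjoint_of_subset_preimage_singleton {α β : Type*} {f : α → β} {S T : Set α}
    {a b : β} (hab : a ≠ b) (hS : S ⊆ f ⁻¹' {a}) (hT : T ⊆ f ⁻¹' {b}) : Disjoint S T :=
  ((Set.disjoint_singleton.2 hab).preimage f).mono hS hT

theorem AddMonoidHom.add_subset_preimage_singleton {M N : Type*} [AddZeroClass M]
    [AddZeroClass N] (f : M →+ N) {S T : Set M} {a b : N} (hS : S ⊆ f ⁻¹' {a})
    (hT : T ⊆ f ⁻¹' {b}) : S + T ⊆ f ⁻¹' {a + b} := by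
  rintro _ ⟨x, hx, y, hy, rfl⟩
  rw [Set.mem_preimage, map_add, Set.mem_singleton_iff.1 (hS hx), Set.mem_singleton_iff.1 (hT hy)]
  rfl

section

variable {ι R : Type*} [DecidableEq ι]

theorem Pi.single_one_left_injective [Zero R] [One R] [NeZero (1 : R)] :
    Function.Injective fun i : ι => (Pi.single i 1 : ι → R) := by
  intro i j hij
  by_contra hne
  simpa [hne] using congrFun hij i

variable (R) in
def pairSum [AddCommMonoid R] [One R] : Sym2 ι → (ι → R) :=
  Sym2.lift ⟨fun a b => Pi.single a 1 + Pi.single b 1, fun _ _ => add_comm _ _⟩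

theorem pairSum_injective [Ring R] (h2 : (2 : R) ≠ 0) :
    Function.Injective (pairSum (ι := ι) R) := by
  have : NeZero (1 : R) := ⟨fun h => h2 (by rw [← one_add_one_eq_two, h, add_zero])⟩
  refine Sym2.ind fun a b => Sym2.ind fun c d h => ?_
  simp only [pairSum, Sym2.lift_mk] at h
  -- otherwise the `a`-coordinate would be `1` or `2` on the left and `0` on the right
  have hac : a = c ∨ a = d := by
    by_contra! hne
    have := congrFun h a
    by_cases hba : b = a <;> simp_all [one_add_one_eq_two]
  rcases hac with rfl | rfl
  · rw [Pi.single_one_left_injective (add_left_cancel h)]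
  · rw [add_comm (Pi.single c 1), add_left_cancel_iff] at h
    rw [Pi.single_one_left_injective h, Sym2.eq_swap]

theorem ncard_image_single_one_add_self [Ring R] (h2 : (2 : R) ≠ 0) (s : Finset ι) :
    ((fun i => Pi.single i 1) '' (s : Set ι) + (fun i => Pi.single i 1) '' (s : Set ι) :
      Set (ι → R)).ncard = (s.card + 1).choose 2 := by
  have hsum : ((fun i => Pi.single i 1) '' (s : Set ι) + (fun i => Pi.single i 1) '' (s : Set ι) :
      Set (ι → R)) = pairSum R '' (s.sym2 : Set (Sym2 ι)) := by
    ext x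
    constructor
    · rintro ⟨_, ⟨a, ha, rfl⟩, _, ⟨b, hb, rfl⟩, rfl⟩
      exact ⟨s(a, b), Finset.mk_mem_sym2_iff.2 ⟨ha, hb⟩, rfl⟩
    · rintro ⟨z, hz, rfl⟩
      induction z using Sym2.ind with
      | _ a b =>
        obtain ⟨ha, hb⟩ := Finset.mk_mem_sym2_iff.1 hz
        exact Set.add_mem_add (Set.mem_image_of_mem _ ha) (Set.mem_image_of_mem _ hb)
  rw [hsum, (pairSum_injective h2).injOn.ncard_image, Set.ncard_coe_finset, Finset.card_sym2]

theorem ncard_add_of_subset_range_single [AddLeftCancelMonoid R] {i₀ : ι} {S T : Set (ι → R)}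
    (hS : S ⊆ Set.range (Pi.single i₀)) (hT : ∀ y ∈ T, y i₀ = 0) :
    (S + T).ncard = S.ncard * T.ncard := by
  rw [← Set.image2_add, ← Set.image_prod, Set.InjOn.ncard_image, Set.ncard_prod]
  rintro ⟨x, y⟩ ⟨hx, hy⟩ ⟨x', y'⟩ ⟨hx', hy'⟩ h
  obtain ⟨r, rfl⟩ := hS hx
  obtain ⟨r', rfl⟩ := hS hx'
  have hr : r = r' := by simpa [hT y hy, hT y' hy'] using congrFun h i₀
  subst hr
  simp only [Prod.mk.injEq, true_and]
  exact add_left_cancel h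

variable (R) in
def axisMultiples [AddMonoidWithOne R] (i₀ : ι) (n : ℕ) : Set (ι → R) :=
  Pi.single i₀ '' (Nat.cast '' Set.Iic n)

variable (R) in
def offAxisBasis [Zero R] [One R] (i₀ : ι) : Set (ι → R) :=
  (fun i => Pi.single i 1) '' {i₀}ᶜ

section AddMonoidWithOne

variable [AddMonoidWithOne R] (i₀ : ι)

theorem axisMultiples_add_axisMultiples (a b : ℕ) :
    axisMultiples R i₀ a + axisMultiples R i₀ b = axisMultiples R i₀ (a + b) := by
  have hcast := Set.image_add (Nat.castAddMonoidHom R) (s := Set.Iic a) (t := Set.Iic b)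
  have hsingle := Set.image_add (AddMonoidHom.single (fun _ => R) i₀)
    (s := Nat.cast '' Set.Iic a) (t := Nat.cast '' Set.Iic b)
  simp only [Nat.coe_castAddMonoidHom, AddMonoidHom.coe_single] at hcast hsingle
  rw [axisMultiples, axisMultiples, axisMultiples, ← hsingle, ← hcast, Nat.Iic_add_Iic]

theorem axisMultiples_finite (n : ℕ) : (axisMultiples R i₀ n).Finite :=
  ((Set.finite_Iic n).image _).image _

theorem ncard_axisMultiples (n : ℕ) :
    (axisMultiples R i₀ n).ncard = ((Nat.cast : ℕ → R) '' Set.Iic n).ncard :=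
  (Pi.single_injective i₀).injOn.ncard_image

end AddMonoidWithOne

theorem offAxisBasis_apply_self [Zero R] [One R] (i₀ : ι) :
    ∀ y ∈ offAxisBasis R i₀, y i₀ = 0 := by
  rintro _ ⟨i, hi, rfl⟩
  exact Pi.single_eq_of_ne (Set.mem_compl_singleton_iff.1 hi).symm 1

theorem axisMultiples_union_offAxisBasis_add_self [AddCommMonoidWithOne R] (i₀ : ι) (n : ℕ) :
    (axisMultiples R i₀ n ∪ offAxisBasis R i₀) + (axisMultiples R i₀ n ∪ offAxisBasis R i₀) =
      axisMultiples R i₀ (n + n) ∪ (axisMultiples R i₀ n + offAxisBasis R i₀ ∪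
        (offAxisBasis R i₀ + offAxisBasis R i₀)) := by
  rw [Set.union_add, Set.add_union, Set.add_union, add_comm (offAxisBasis R i₀),
    axisMultiples_add_axisMultiples, Set.union_assoc, ← Set.union_assoc (_ + _), Set.union_self]

variable [Fintype ι]

theorem offAxisBasis_finite [Zero R] [One R] (i₀ : ι) : (offAxisBasis R i₀).Finite :=
  (Set.toFinite _).image _

theorem ncard_offAxisBasis [Zero R] [One R] [NeZero (1 : R)] (i₀ : ι) :
    (offAxisBasis R i₀).ncard = Fintype.card ι - 1 := by
  rw [offAxisBasis, Pi.single_one_left_injective.injOn.ncard_image, Set.ncard_compl,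
    Set.ncard_singleton, Nat.card_eq_fintype_card]

theorem ncard_offAxisBasis_add_self [Ring R] (h2 : (2 : R) ≠ 0) (i₀ : ι) :
    (offAxisBasis R i₀ + offAxisBasis R i₀).ncard = (Fintype.card ι).choose 2 := by
  have hcard : Fintype.card ι - 1 + 1 = Fintype.card ι :=
    Nat.sub_add_cancel (Fintype.card_pos_iff.2 ⟨i₀⟩)
  rw [offAxisBasis, ← Finset.coe_singleton, ← Finset.coe_compl,
    ncard_image_single_one_add_self h2, Finset.card_compl, Finset.card_singleton, hcard]

variable (R) in
def offAxisSum [AddCommMonoid R] (i₀ : ι) : (ι → R) →+ R :=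
  ∑ j ∈ ({i₀}ᶜ : Finset ι), Pi.evalAddMonoidHom (fun _ => R) j

theorem offAxisSum_single [AddCommMonoid R] (i₀ i : ι) (r : R) :
    offAxisSum R i₀ (Pi.single i r) = if i = i₀ then 0 else r := by
  simp [offAxisSum, Finset.sum_pi_single']

theorem axisMultiples_subset_preimage_offAxisSum [AddCommMonoidWithOne R] (i₀ : ι) (n : ℕ) :
    axisMultiples R i₀ n ⊆ offAxisSum R i₀ ⁻¹' {0} := by
  rintro _ ⟨r, -, rfl⟩
  simp [offAxisSum_single]

theorem offAxisBasis_subset_preimage_offAxisSum [AddCommMonoidWithOne R] (i₀ : ι) :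
    offAxisBasis R i₀ ⊆ offAxisSum R i₀ ⁻¹' {1} := by
  rintro _ ⟨i, hi, rfl⟩
  simp [offAxisSum_single, Set.mem_compl_singleton_iff.1 hi]

variable [Ring R] (i₀ : ι)

theorem ncard_axisMultiples_union_offAxisBasis [NeZero (1 : R)] (n : ℕ) :
    (axisMultiples R i₀ n ∪ offAxisBasis R i₀).ncard =
      ((Nat.cast : ℕ → R) '' Set.Iic n).ncard + (Fintype.card ι - 1) := by
  have hdisj : Disjoint (axisMultiples R i₀ n) (offAxisBasis R i₀) :=
    Set.disjoint_of_subset_preimage_singleton zero_ne_one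
      (axisMultiples_subset_preimage_offAxisSum i₀ n)
      (offAxisBasis_subset_preimage_offAxisSum i₀)
  rw [Set.ncard_union_eq hdisj (axisMultiples_finite i₀ n) (offAxisBasis_finite i₀),
    ncard_axisMultiples, ncard_offAxisBasis]

theorem ncard_add_self_axisMultiples_union_offAxisBasis (h2 : (2 : R) ≠ 0) (n : ℕ) :
    ((axisMultiples R i₀ n ∪ offAxisBasis R i₀) +
        (axisMultiples R i₀ n ∪ offAxisBasis R i₀)).ncard =
      ((Nat.cast : ℕ → R) '' Set.Iic (n + n)).ncard +
        ((Nat.cast : ℕ → R) '' Set.Iic n).ncard * (Fintype.card ι - 1) +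
          (Fintype.card ι).choose 2 := by
  have : NeZero (1 : R) := ⟨fun h => h2 (by rw [← one_add_one_eq_two, h, add_zero])⟩
  have hL := axisMultiples_subset_preimage_offAxisSum (R := R) i₀ (n + n)
  have hLE := (offAxisSum R i₀).add_subset_preimage_singleton
    (axisMultiples_subset_preimage_offAxisSum i₀ n) (offAxisBasis_subset_preimage_offAxisSum i₀)
  have hEE := (offAxisSum R i₀).add_subset_preimage_singleton
    (offAxisBasis_subset_preimage_offAxisSum i₀) (offAxisBasis_subset_preimage_offAxisSum i₀)
  rw [zero_add] at hLE
  have h02 : (0 : R) ≠ 1 + 1 := by rw [one_add_one_eq_two]; exact h2.symm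
  have h12 : (1 : R) ≠ 1 + 1 := by rw [ne_eq, left_eq_add]; exact one_ne_zero
  have hdisj₁ := Set.disjoint_union_right.2
    ⟨Set.disjoint_of_subset_preimage_singleton zero_ne_one hL hLE,
      Set.disjoint_of_subset_preimage_singleton h02 hL hEE⟩
  have hdisj₂ := Set.disjoint_of_subset_preimage_singleton h12 hLE hEE
  have hLfin := axisMultiples_finite (R := R) i₀
  have hEfin := offAxisBasis_finite (R := R) i₀
  rw [axisMultiples_union_offAxisBasis_add_self,
    Set.ncard_union_eq hdisj₁ (hLfin _) (((hLfin n).add hEfin).union (hEfin.add hEfin)),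
    Set.ncard_union_eq hdisj₂ ((hLfin n).add hEfin) (hEfin.add hEfin),
    ncard_add_of_subset_range_single (S := axisMultiples R i₀ n) (Set.image_subset_range _ _)
      (offAxisBasis_apply_self i₀),
    ncard_axisMultiples, ncard_axisMultiples, ncard_offAxisBasis, ncard_offAxisBasis_add_self h2,
    add_assoc]

end

theorem affSpan_axisMultiples_union_offAxisBasis {ι : Type*} [DecidableEq ι] [Fintype ι]
    {n q : ℕ} (i₀ : ι) (hq : 1 ≤ q) :
    affSpan (axisMultiples (ZMod n) i₀ q ∪ offAxisBasis (ZMod n) i₀) = Set.univ := by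
  refine affSpan_eq_univ_of_zero_mem (Or.inl ⟨0, ⟨0, Nat.zero_le q, Nat.cast_zero⟩,
    Pi.single_zero i₀⟩) (top_le_iff.1 ?_)
  refine ZMod.addSubgroupClosure_range_single_one n ι ▸ AddSubgroup.closure_mono ?_
  rintro _ ⟨i, rfl⟩
  by_cases hi : i = i₀
  · exact Or.inl ⟨1, ⟨1, hq, Nat.cast_one⟩, hi ▸ rfl⟩
  · exact Or.inr ⟨i, hi, rfl⟩

theorem statement18 (p m q : ℕ) (hp3 : 3 ≤ p) (hm : 2 ≤ m)
    (hq1 : 1 ≤ q) (hq2 : q ≤ p - 1)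
    (A : Set (Fin m → ZMod p))
    (hA : A = {x | ∃ k : ℕ, k ≤ q ∧ x = k • (Pi.single (⟨0, by omega⟩ : Fin m) 1 : Fin m → ZMod p)}
        ∪ {x | ∃ i : Fin m, (i : ℕ) ≠ 0 ∧ x = (Pi.single i 1 : Fin m → ZMod p)}) :
    A.ncard = m + q ∧
    (A + A).ncard = m * (m + 1) / 2 + q * (m - 1) + min (2 * q) (p - 1) ∧
    affSpan A = Set.univ ∧
    (affSpan A).ncard = p ^ m := by
  have : Fact (1 < p) := ⟨by omega⟩
  have h2 : (2 : ZMod p) ≠ 0 := by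
    exact_mod_cast (ZMod.natCast_eq_zero_iff 2 p).not.2
      (Nat.not_dvd_of_pos_of_lt two_pos (by omega))
  set i₀ : Fin m := ⟨0, by omega⟩
  have hA' : A = axisMultiples (ZMod p) i₀ q ∪ offAxisBasis (ZMod p) i₀ := by
    rw [hA]
    ext x
    simp only [axisMultiples, offAxisBasis, Set.mem_union, Set.mem_ofPred_eq, Set.mem_image,
      exists_exists_and_eq_and, Set.mem_Iic, Set.mem_compl_singleton_iff, ← Pi.single_nsmul,
      nsmul_one, Fin.ne_iff_vne, @eq_comm _ x]
    rfl
  have hspan : affSpan A = Set.univ := hA' ▸ affSpan_axisMultiples_union_offAxisBasis i₀ hq1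
  refine ⟨?_, ?_, hspan, ?_⟩
  · rw [hA', ncard_axisMultiples_union_offAxisBasis, ZMod.ncard_natCast_image_Iic,
      Fintype.card_fin]
    omega
  · rw [hA', ncard_add_self_axisMultiples_union_offAxisBasis i₀ h2, ZMod.ncard_natCast_image_Iic,
      ZMod.ncard_natCast_image_Iic, Fintype.card_fin, Nat.choose_two_right, min_eq_left hq2,
      ← two_mul]
    have htri : m * (m + 1) / 2 = m * (m - 1) / 2 + m := by
      rw [← Nat.triangle_succ, Nat.add_sub_cancel, mul_comm]
    rw [htri, add_one_mul]
    omega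
  · simp [hspan, ZMod.card]
end
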